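/- arXiv:2104.04816 — 2 statements merged into one kernel-verified Lean document; each statement's English description precedes it below -/
import Mathlib

section
/- Fix integers j ≥ 0 and k ≥ 0, a matrix M ∈ ℝ^{m×d}, and vectors w_j, …, w_{j+k} ∈ ℝ^m with M'w_i ≠ 0 for each i, together with flags χ_i ∈ {0,1} for i = j, …, j+k. Let Φ denote the set of normalized directions { M'w_i χ_i / ‖M'w_i‖₂ : i = j, …, j+k }, and let 𝒢 denote the collection of all matrices G whose columns form a maximal linearly independent subset of Φ. Then for every y ∈ span(Φ), ‖ (I − (M'w_{j+k} w_{j+k}'M / ‖M'w_{j+k}‖₂²) χ_{j+k}) ⋯ (I − (M'w_j w_j'M / ‖M'w_j‖₂²) χ_j) y ‖₂² ≤ [1 − min_{G ∈ 𝒢} det(G'G)] ‖y‖₂². -/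
/-!
Each factor is `x ↦ x - ⟪u, x⟫ u` with `‖u‖ ≤ 1`. Induct on the number of factors, carrying a
maximal linearly independent family `b` of the directions seen so far such that the product
contracts `‖·‖²` by `1 - det (gram b)` on their span `V`. A direction already in `V` changes
nothing, since every factor is a contraction. A new direction `v = p + q` with `p ∈ V`, `q ∈ Vᗮ`
is appended to `b`, which multiplies the Gram determinant by `‖q‖²`; writing `y = y_V + c q`
with `y_V ∈ V`, the bound for `y` follows from the one for `y_V`, Cauchy–Schwarz for `⟪p, ·⟫`
and a scalar quadratic inequality in `c`.
-/

open Matrix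

/-- The Euclidean (ℓ²) norm of a vector in ℝ^d. -/
noncomputable def euclNorm {d : ℕ} (v : Fin d → ℝ) : ℝ := Real.sqrt (∑ i, v i ^ 2)

/-- The Gram determinant `det(G'G)` of the matrix `G` whose columns are the elements
of the finite set `S` of vectors in ℝ^d. -/
noncomputable def gramDet {d : ℕ} (S : Finset (Fin d → ℝ)) : ℝ :=
  (Matrix.of fun a b : ↥S => (a : Fin d → ℝ) ⬝ᵥ (b : Fin d → ℝ)).det

/-- `S` is a maximal linearly independent subset of `Φ`: a linearly independent
subset of `Φ` with the same span as `Φ`. -/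
def IsMaxLinIndepSubset {d : ℕ} (Φ : Set (Fin d → ℝ)) (S : Finset (Fin d → ℝ)) : Prop :=
  ↑S ⊆ Φ ∧ LinearIndependent ℝ (fun v : ↥S => (v : Fin d → ℝ)) ∧
    Submodule.span ℝ (S : Set (Fin d → ℝ)) = Submodule.span ℝ Φ

open scoped RealInnerProductSpace

lemma meany_scalar_ineq {γ Q t X a c : ℝ} (hγ0 : 0 ≤ γ) (hγ1 : γ ≤ 1) (hQ : Q ≤ 1) (ht : 0 ≤ t)
    (hX : X ≤ (1 - γ) * t) (ha : a ^ 2 ≤ (1 - Q) * X) :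
    X + c ^ 2 * Q - (a + c * Q) ^ 2 ≤ (1 - γ * Q) * (t + c ^ 2 * Q) := by
  have hR : 0 ≤ γ * t * (1 - Q) + a ^ 2 + 2 * a * c * Q + (1 - γ) * c ^ 2 * Q ^ 2 := by
    rcases hγ1.lt_or_eq with hγ1 | rfl
    · have ha' : a ^ 2 ≤ (1 - Q) * ((1 - γ) * t) :=
        ha.trans (mul_le_mul_of_nonneg_left hX (by linarith))
      -- complete the square in `c`
      have hsq : (1 - γ) * (γ * t * (1 - Q) + a ^ 2 + 2 * a * c * Q + (1 - γ) * c ^ 2 * Q ^ 2) =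
          γ * ((1 - Q) * ((1 - γ) * t) - a ^ 2) + (a + (1 - γ) * c * Q) ^ 2 := by ring
      refine le_of_mul_le_mul_left ?_ (sub_pos.2 hγ1)
      rw [mul_zero, hsq]
      exact add_nonneg (mul_nonneg hγ0 (sub_nonneg.2 ha')) (sq_nonneg _)
    · have ha0 : a = 0 := by nlinarith
      subst ha0
      nlinarith
  nlinarith

section InnerProductSpace

variable {E : Type*} [NormedAddCommGroup E] [InnerProductSpace ℝ E]

/-- For a unit vector `u` this is the orthogonal projection `I - u u'` onto `uᗮ`. -/
noncomputable def projStep (u x : E) : E := x - ⟪u, x⟫ • u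

noncomputable def projSweep (u : ℕ → E) : ℕ → E → E
  | 0, x => x
  | n + 1, x => projStep (u n) (projSweep u n x)

lemma norm_projStep_sq (u x : E) :
    ‖projStep u x‖ ^ 2 = ‖x‖ ^ 2 - ⟪u, x⟫ ^ 2 * (2 - ‖u‖ ^ 2) := by
  rw [projStep, norm_sub_sq_real, inner_smul_right, norm_smul, real_inner_comm,
    Real.norm_eq_abs, mul_pow, sq_abs]
  ring

lemma norm_projStep_sq_le {u : E} (hu : ‖u‖ ≤ 1) (x : E) :
    ‖projStep u x‖ ^ 2 ≤ ‖x‖ ^ 2 - ⟪u, x⟫ ^ 2 := by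
  rw [norm_projStep_sq]
  have hu2 : ‖u‖ ^ 2 ≤ 1 := pow_le_one₀ (norm_nonneg u) hu
  nlinarith [sq_nonneg ⟪u, x⟫]

lemma projSweep_add_of_inner_eq_zero {u : ℕ → E} {n : ℕ} {r : E}
    (hr : ∀ i < n, ⟪u i, r⟫ = 0) (x : E) :
    projSweep u n (x + r) = projSweep u n x + r := by
  induction n with
  | zero => rfl
  | succ n ih =>
    rw [projSweep, projSweep, ih fun i hi => hr i (by omega), projStep, projStep,
      inner_add_right, hr n (by omega), add_zero]
    abel

lemma projSweep_mem {u : ℕ → E} {n : ℕ} {V : Submodule ℝ E} (hu : ∀ i < n, u i ∈ V)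
    {x : E} (hx : x ∈ V) : projSweep u n x ∈ V := by
  induction n with
  | zero => exact hx
  | succ n ih =>
    exact V.sub_mem (ih fun i hi => hu i (by omega)) (V.smul_mem _ (hu n (by omega)))

lemma det_gram_snoc {n : ℕ} (b : Fin n → E) {v q : E}
    (hvq : v - q ∈ Submodule.span ℝ (Set.range b)) (hq : ∀ i, ⟪b i, q⟫ = 0) :
    (gram ℝ (Fin.snoc b v : Fin (n + 1) → E)).det = (gram ℝ b).det * ‖q‖ ^ 2 := by
  obtain ⟨c, hc⟩ := (Submodule.mem_span_range_iff_exists_fun ℝ).1 hvq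
  set A := gram ℝ (Fin.snoc b v : Fin (n + 1) → E)
  have hqf : ∀ j, ⟪q, (Fin.snoc b v : Fin (n + 1) → E) j⟫ =
      ‖q‖ ^ 2 * (Pi.single (Fin.last n) 1 : Fin (n + 1) → ℝ) j := by
    intro j
    induction j using Fin.lastCases with
    | last =>
      rw [Fin.snoc_last, Pi.single_eq_same, mul_one, ← real_inner_self_eq_norm_sq,
        ← sub_add_cancel v q, ← hc, inner_add_right, inner_sum, add_eq_right]
      exact Finset.sum_eq_zero fun i _ => by rw [inner_smul_right, real_inner_comm, hq, mul_zero]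
    | cast i =>
      rw [Fin.snoc_castSucc, Pi.single_eq_of_ne (Fin.castSucc_ne_last i), mul_zero,
        real_inner_comm, hq]
  have hrow : A (Fin.last n) = ∑ k, (Fin.snoc c 0 : Fin (n + 1) → ℝ) k • A k +
      ‖q‖ ^ 2 • Pi.single (Fin.last n) 1 := by
    ext j
    simp only [A, gram_apply, Pi.add_apply, Finset.sum_apply, Pi.smul_apply, smul_eq_mul,
      Fin.sum_univ_castSucc, Fin.snoc_castSucc, Fin.snoc_last, zero_mul, add_zero, ← hqf]
    rw [← sub_add_cancel v q, ← hc, inner_add_left, sum_inner]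
    simp only [inner_smul_left, RCLike.conj_to_real]
  rw [← A.updateRow_eq_self (Fin.last n), hrow, det_updateRow_add, det_updateRow_sum,
    det_updateRow_smul, ← adjugate_apply, adjugate_fin_succ_eq_det_submatrix, Fin.succAbove_last]
  simp only [Fin.snoc_last, smul_eq_mul, zero_mul, zero_add, ← two_mul, pow_mul, neg_one_sq,
    one_pow, one_mul, mul_comm (‖q‖ ^ 2)]
  congr 2
  ext i j
  simp [A, gram_apply]

lemma norm_projSweep_succ_sq_le (V : Submodule ℝ E) [V.HasOrthogonalProjection]
    {u : ℕ → E} {n : ℕ} {γ : ℝ} (hγ0 : 0 ≤ γ) (hγ1 : γ ≤ 1) (huV : ∀ i < n, u i ∈ V)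
    (hun : ‖u n‖ ≤ 1) (hV : ∀ y ∈ V, ‖projSweep u n y‖ ^ 2 ≤ (1 - γ) * ‖y‖ ^ 2)
    (c : ℝ) {y₀ : E} (hy₀ : y₀ ∈ V) :
    ‖projSweep u (n + 1) (c • u n + y₀)‖ ^ 2 ≤
      (1 - γ * ‖Vᗮ.starProjection (u n)‖ ^ 2) * ‖c • u n + y₀‖ ^ 2 := by
  set p := V.starProjection (u n)
  set q := Vᗮ.starProjection (u n)
  have hp : p ∈ V := V.starProjection_apply_mem _
  have hq : q ∈ Vᗮ := Vᗮ.starProjection_apply_mem _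
  have hpq : p + q = u n := V.starProjection_add_starProjection_orthogonal _
  have hnorm_u : ‖u n‖ ^ 2 = ‖p‖ ^ 2 + ‖q‖ ^ 2 :=
    Submodule.norm_sq_eq_add_norm_sq_starProjection _ V
  set yV := y₀ + c • p
  have hyV : yV ∈ V := V.add_mem hy₀ (V.smul_mem c hp)
  have hy : c • u n + y₀ = yV + c • q := by rw [← hpq]; module
  set x := projSweep u n yV
  have hx : x ∈ V := projSweep_mem huV hyV
  have hsweep : projSweep u n (c • u n + y₀) = x + c • q := by
    rw [hy]
    refine projSweep_add_of_inner_eq_zero (fun i hi => ?_) yV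
    rw [inner_smul_right, V.inner_right_of_mem_orthogonal (huV i hi) hq, mul_zero]
  have hnorm_add : ∀ z ∈ V, ‖z + c • q‖ ^ 2 = ‖z‖ ^ 2 + c ^ 2 * ‖q‖ ^ 2 := fun z hz => by
    rw [norm_add_sq_real, inner_smul_right, V.inner_right_of_mem_orthogonal hz hq, norm_smul,
      Real.norm_eq_abs, mul_pow, sq_abs]
    ring
  have hinner : ⟪u n, x + c • q⟫ = ⟪p, x⟫ + c * ‖q‖ ^ 2 := by
    rw [← hpq, inner_add_left, inner_add_right, inner_add_right, inner_smul_right, inner_smul_right,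
      V.inner_right_of_mem_orthogonal hp hq, V.inner_left_of_mem_orthogonal hx hq,
      real_inner_self_eq_norm_sq]
    ring
  have hu2 : ‖u n‖ ^ 2 ≤ 1 := pow_le_one₀ (norm_nonneg _) hun
  have hQ : ‖q‖ ^ 2 ≤ 1 := by nlinarith [sq_nonneg ‖p‖]
  have hCS : ⟪p, x⟫ ^ 2 ≤ (1 - ‖q‖ ^ 2) * ‖x‖ ^ 2 := by
    have := real_inner_mul_inner_self_le p x
    rw [real_inner_self_eq_norm_sq, real_inner_self_eq_norm_sq] at this
    nlinarith [sq_nonneg ‖x‖]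
  calc ‖projSweep u (n + 1) (c • u n + y₀)‖ ^ 2
      ≤ ‖x + c • q‖ ^ 2 - ⟪u n, x + c • q⟫ ^ 2 := by
        rw [projSweep, hsweep]
        exact norm_projStep_sq_le hun _
    _ = ‖x‖ ^ 2 + c ^ 2 * ‖q‖ ^ 2 - (⟪p, x⟫ + c * ‖q‖ ^ 2) ^ 2 := by rw [hnorm_add x hx, hinner]
    _ ≤ (1 - γ * ‖q‖ ^ 2) * (‖yV‖ ^ 2 + c ^ 2 * ‖q‖ ^ 2) :=
        meany_scalar_ineq hγ0 hγ1 hQ (sq_nonneg _) (hV yV hyV) hCS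
    _ = (1 - γ * ‖q‖ ^ 2) * ‖c • u n + y₀‖ ^ 2 := by rw [hy, hnorm_add yV hyV]

theorem exists_linearIndependent_norm_projSweep_sq_le (u : ℕ → E) (n : ℕ)
    (hu : ∀ i < n, ‖u i‖ ≤ 1) :
    ∃ (r : ℕ) (b : Fin r → E), LinearIndependent ℝ b ∧ Set.range b ⊆ u '' Set.Iio n ∧
      Submodule.span ℝ (Set.range b) = Submodule.span ℝ (u '' Set.Iio n) ∧
      (gram ℝ b).det ≤ 1 ∧ ∀ y ∈ Submodule.span ℝ (u '' Set.Iio n),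
        ‖projSweep u n y‖ ^ 2 ≤ (1 - (gram ℝ b).det) * ‖y‖ ^ 2 := by
  induction n with
  | zero =>
    refine ⟨0, Fin.elim0, linearIndependent_empty_type, by simp, by simp, by simp, ?_⟩
    simp [projSweep]
  | succ n ih =>
    obtain ⟨r, b, hb, hsub, hspan, hdet, hbound⟩ := ih fun i hi => hu i (by omega)
    have himage : u '' Set.Iio (n + 1) = insert (u n) (u '' Set.Iio n) := by
      rw [← Order.succ_eq_add_one, Order.Iio_succ_eq_insert, Set.image_insert_eq]
    set V := Submodule.span ℝ (u '' Set.Iio n)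
    have huV : ∀ i < n, u i ∈ V := fun i hi => Submodule.subset_span ⟨i, hi, rfl⟩
    have hun : ‖u n‖ ≤ 1 := hu n (by omega)
    by_cases hv : u n ∈ V
    · refine ⟨r, b, hb, hsub.trans (himage ▸ Set.subset_insert _ _), ?_, hdet, fun y hy => ?_⟩
      · rw [himage, Submodule.span_insert_eq_span hv, hspan]
      rw [himage, Submodule.span_insert_eq_span hv] at hy
      calc ‖projSweep u (n + 1) y‖ ^ 2 ≤ ‖projSweep u n y‖ ^ 2 :=
            (norm_projStep_sq_le hun _).trans (sub_le_self _ (sq_nonneg _))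
        _ ≤ _ := hbound y hy
    · have : FiniteDimensional ℝ V :=
        hspan ▸ FiniteDimensional.span_of_finite ℝ (Set.finite_range b)
      set q := Vᗮ.starProjection (u n)
      have hdet' :
          (gram ℝ (Fin.snoc b (u n) : Fin (r + 1) → E)).det = (gram ℝ b).det * ‖q‖ ^ 2 := by
        refine det_gram_snoc b ?_ fun i => ?_
        · rw [hspan, ← V.starProjection_add_starProjection_orthogonal (u n), add_sub_cancel_right]
          exact V.starProjection_apply_mem _
        · exact V.inner_right_of_mem_orthogonal (hspan ▸ Submodule.subset_span ⟨i, rfl⟩)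
            (Vᗮ.starProjection_apply_mem _)
      refine ⟨r + 1, Fin.snoc b (u n), linearIndependent_finSnoc.2 ⟨hb, hspan ▸ hv⟩, ?_, ?_, ?_,
        fun y hy => ?_⟩
      · rw [Fin.range_snoc, himage]
        exact Set.insert_subset_insert hsub
      · rw [Fin.range_snoc, himage, Submodule.span_insert, Submodule.span_insert, hspan]
      · rw [hdet']
        exact mul_le_one₀ hdet (sq_nonneg _)
          (pow_le_one₀ (norm_nonneg _) ((Vᗮ.norm_starProjection_apply_le _).trans hun))
      rw [himage, Submodule.mem_span_insert] at hy
      obtain ⟨c, y₀, hy₀, rfl⟩ := hy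
      rw [hdet']
      exact norm_projSweep_succ_sq_le V (posSemidef_gram ℝ b).det_nonneg hdet huV hun hbound c hy₀

end InnerProductSpace

section EuclideanSpace

variable {d : ℕ}

lemma euclNorm_eq_norm (x : Fin d → ℝ) : euclNorm x = ‖WithLp.toLp 2 x‖ := by
  simp [euclNorm, EuclideanSpace.norm_eq]

lemma dotProduct_eq_inner (x y : Fin d → ℝ) : x ⬝ᵥ y = ⟪WithLp.toLp 2 x, WithLp.toLp 2 y⟫ := by
  rw [EuclideanSpace.inner_toLp_toLp, star_trivial, dotProduct_comm]

lemma gramDet_eq_det_gram (S : Finset (Fin d → ℝ)) :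
    gramDet S = (gram ℝ fun v : S => WithLp.toLp 2 (v : Fin d → ℝ)).det := by
  simp only [gramDet, gram, dotProduct_eq_inner]

lemma gramDet_nonneg (S : Finset (Fin d → ℝ)) : 0 ≤ gramDet S :=
  gramDet_eq_det_gram S ▸ (posSemidef_gram ℝ _).det_nonneg

lemma gramDet_image_ofLp {r : ℕ} {b : Fin r → EuclideanSpace ℝ (Fin d)}
    (hb : Function.Injective b) :
    gramDet (Finset.univ.image fun i => (b i).ofLp) = (gram ℝ b).det := by
  let e : Fin r ≃ ↥(Finset.univ.image fun i => (b i).ofLp) :=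
    Equiv.ofBijective (fun i => ⟨(b i).ofLp, Finset.mem_image_of_mem _ (Finset.mem_univ i)⟩)
      ⟨fun i j h => hb (WithLp.ofLp_injective 2 (congrArg Subtype.val h)), fun ⟨_, hv⟩ => by
        obtain ⟨i, -, rfl⟩ := Finset.mem_image.1 hv
        exact ⟨i, rfl⟩⟩
  rw [gramDet_eq_det_gram, ← det_submatrix_equiv_self e]
  rfl

lemma isMaxLinIndepSubset_image_ofLp {r : ℕ} {b : Fin r → EuclideanSpace ℝ (Fin d)}
    {Φ : Set (Fin d → ℝ)} (hb : LinearIndependent ℝ b) (hsub : Set.range b ⊆ WithLp.toLp 2 '' Φ)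
    (hspan : Submodule.span ℝ (Set.range b) = Submodule.span ℝ (WithLp.toLp 2 '' Φ)) :
    IsMaxLinIndepSubset Φ (Finset.univ.image fun i => (b i).ofLp) := by
  set L : EuclideanSpace ℝ (Fin d) →ₗ[ℝ] Fin d → ℝ :=
    (WithLp.linearEquiv 2 ℝ (Fin d → ℝ)).toLinearMap
  have hcoe : ((Finset.univ.image fun i => (b i).ofLp : Finset _) : Set (Fin d → ℝ)) =
      L '' Set.range b := by
    rw [Finset.coe_image, Finset.coe_univ, Set.image_univ, ← Set.range_comp]
    rfl
  refine ⟨?_, ?_, ?_⟩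
  · rw [hcoe]
    refine (Set.image_mono hsub).trans ?_
    rw [Set.image_image]
    simp [L]
  · show LinearIndepOn ℝ id _
    rw [hcoe, ← Set.range_comp]
    exact (linearIndepOn_id_range_iff ((WithLp.ofLp_injective 2).comp hb.injective)).2
      (hb.map' L (WithLp.linearEquiv 2 ℝ (Fin d → ℝ)).ker)
  · rw [hcoe, Submodule.span_image, hspan, ← Submodule.span_image, Set.image_image]
    simp [L]

lemma toLp_mem_span_image_toLp {Φ : Set (Fin d → ℝ)} {y : Fin d → ℝ}
    (hy : y ∈ Submodule.span ℝ Φ) : WithLp.toLp 2 y ∈ Submodule.span ℝ (WithLp.toLp 2 '' Φ) :=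
  (Submodule.apply_mem_span_image_iff_mem_span
    (f := (WithLp.linearEquiv 2 ℝ (Fin d → ℝ)).symm.toLinearMap)
    (WithLp.linearEquiv 2 ℝ (Fin d → ℝ)).symm.injective).2 hy

lemma toLp_eq_projSweep {e z : ℕ → Fin d → ℝ} {n : ℕ}
    (hz : ∀ i < n, z (i + 1) = z i - (e i ⬝ᵥ z i) • e i) :
    WithLp.toLp 2 (z n) = projSweep (fun i => WithLp.toLp 2 (e i)) n (WithLp.toLp 2 (z 0)) := by
  induction n with
  | zero => rfl
  | succ n ih =>
    rw [projSweep, ← ih fun i hi => hz i (by omega), hz n (by omega), projStep, dotProduct_eq_inner]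
    rfl

lemma norm_toLp_div_smul_le_one {χ : ℝ} (hχ : χ = 0 ∨ χ = 1) (g : Fin d → ℝ) :
    ‖WithLp.toLp 2 ((χ / euclNorm g) • g)‖ ≤ 1 := by
  have hg : 0 ≤ euclNorm g := Real.sqrt_nonneg _
  rw [WithLp.toLp_smul, norm_smul, ← euclNorm_eq_norm, Real.norm_eq_abs,
    abs_div, abs_of_nonneg hg]
  rcases hχ with rfl | rfl
  · simp
  · rcases eq_or_ne (euclNorm g) 0 with h | h
    · simp [h]
    · rw [abs_one, one_div_mul_cancel h]

lemma div_smul_eq_dotProduct_smul {χ : ℝ} (hχ : χ = 0 ∨ χ = 1) (g z : Fin d → ℝ) :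
    (χ * (g ⬝ᵥ z) / euclNorm g ^ 2) • g =
      ((χ / euclNorm g) • g ⬝ᵥ z) • (χ / euclNorm g) • g := by
  rw [smul_dotProduct, smul_smul, smul_eq_mul]
  congr 1
  rcases hχ with rfl | rfl <;> ring

end EuclideanSpace

-- `z i` is the product of the first `i` projections applied to `y`; indices start at `0`, not `j`.
theorem stmt_0_general {m d k : ℕ} (M : Matrix (Fin m) (Fin d) ℝ)
    (w : Fin (k + 1) → Fin m → ℝ)
    (χ : Fin (k + 1) → ℝ) (hχ : ∀ i, χ i = 0 ∨ χ i = 1)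
    (Φ : Set (Fin d → ℝ))
    (hΦ : Φ = Set.range fun i => (χ i / euclNorm (Mᵀ.mulVec (w i))) • Mᵀ.mulVec (w i))
    (y : Fin d → ℝ) (hy : y ∈ Submodule.span ℝ Φ)
    (z : ℕ → Fin d → ℝ) (hz0 : z 0 = y)
    (hz : ∀ i : Fin (k + 1), z (i.1 + 1) =
      z i.1 - (χ i * (w i ⬝ᵥ M.mulVec (z i.1)) / euclNorm (Mᵀ.mulVec (w i)) ^ 2) • Mᵀ.mulVec (w i)) :
    euclNorm (z (k + 1)) ^ 2 ≤
      (1 - sInf {x | ∃ S : Finset (Fin d → ℝ), IsMaxLinIndepSubset Φ S ∧ x = gramDet S}) *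
        euclNorm y ^ 2 := by
  set e : ℕ → Fin d → ℝ := fun i => if h : i < k + 1 then
    (χ ⟨i, h⟩ / euclNorm (Mᵀ *ᵥ w ⟨i, h⟩)) • Mᵀ *ᵥ w ⟨i, h⟩ else 0
  set u : ℕ → EuclideanSpace ℝ (Fin d) := fun i => WithLp.toLp 2 (e i)
  have he : ∀ i : Fin (k + 1), e i = (χ i / euclNorm (Mᵀ *ᵥ w i)) • Mᵀ *ᵥ w i :=
    fun i => dif_pos i.isLt
  have hΦu : u '' Set.Iio (k + 1) = WithLp.toLp 2 '' Φ := by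
    rw [← Set.image_image (WithLp.toLp 2) e, hΦ]
    congr 1
    ext x
    exact ⟨fun ⟨i, hi, hx⟩ => ⟨⟨i, hi⟩, (he ⟨i, hi⟩).symm.trans hx⟩,
      fun ⟨i, hx⟩ => ⟨i, i.isLt, (he i).trans hx⟩⟩
  have hu : ∀ i < k + 1, ‖u i‖ ≤ 1 := fun i hi => by
    simpa only [u, he ⟨i, hi⟩] using norm_toLp_div_smul_le_one (hχ ⟨i, hi⟩) _
  have hzu : WithLp.toLp 2 (z (k + 1)) = projSweep u (k + 1) (WithLp.toLp 2 y) := by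
    refine hz0 ▸ toLp_eq_projSweep fun i hi => ?_
    rw [hz ⟨i, hi⟩, he ⟨i, hi⟩, dotProduct_mulVec, ← mulVec_transpose,
      div_smul_eq_dotProduct_smul (hχ _)]
  obtain ⟨r, b, hb, hsub, hspan, -, hbound⟩ :=
    exists_linearIndependent_norm_projSweep_sq_le u (k + 1) hu
  rw [hΦu] at hsub hspan hbound
  have hmin : sInf {x | ∃ S, IsMaxLinIndepSubset Φ S ∧ x = gramDet S} ≤ (gram ℝ b).det :=
    gramDet_image_ofLp hb.injective ▸ csInf_le ⟨0, by rintro _ ⟨S, -, rfl⟩; exact gramDet_nonneg S⟩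
      ⟨_, isMaxLinIndepSubset_image_ofLp hb hsub hspan, rfl⟩
  rw [euclNorm_eq_norm, euclNorm_eq_norm, hzu]
  exact (hbound _ (toLp_mem_span_image_toLp hy)).trans
    (mul_le_mul_of_nonneg_right (by linarith) (sq_nonneg _))

/-- Meany's inequality, extended: for the product of the projections
`(I − M'wᵢwᵢ'M χᵢ/‖M'wᵢ‖₂²)`, `i = j, …, j+k`, applied to any `y` in the span of the
normalized directions `Φ = {M'wᵢ χᵢ/‖M'wᵢ‖₂}`, the squared Euclidean norm contracts by the
factor `1 − min_{G ∈ 𝒢} det(G'G)`, the minimum being over all matrices `G` whose columns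
form a maximal linearly independent subset of `Φ`.  (The iterate `z i` is the product of
the first `i` projections applied to `y`; indices are shifted so that `i = 0, …, k`.) -/
theorem stmt_0 {m d k : ℕ} (M : Matrix (Fin m) (Fin d) ℝ)
    (w : Fin (k + 1) → Fin m → ℝ) (hw : ∀ i, Mᵀ.mulVec (w i) ≠ 0)
    (χ : Fin (k + 1) → ℝ) (hχ : ∀ i, χ i = 0 ∨ χ i = 1)
    (Φ : Set (Fin d → ℝ))
    (hΦ : Φ = Set.range fun i => (χ i / euclNorm (Mᵀ.mulVec (w i))) • Mᵀ.mulVec (w i))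
    (y : Fin d → ℝ) (hy : y ∈ Submodule.span ℝ Φ)
    (z : ℕ → Fin d → ℝ) (hz0 : z 0 = y)
    (hz : ∀ i : Fin (k + 1), z (i.1 + 1) =
      z i.1 - (χ i * (w i ⬝ᵥ M.mulVec (z i.1)) / euclNorm (Mᵀ.mulVec (w i)) ^ 2) • Mᵀ.mulVec (w i)) :
    euclNorm (z (k + 1)) ^ 2 ≤
      (1 - sInf {x | ∃ S : Finset (Fin d → ℝ), IsMaxLinIndepSubset Φ S ∧ x = gramDet S}) *
        euclNorm y ^ 2 :=
  stmt_0_general M w χ hχ Φ hΦ y hy z hz0 hz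
end

section
/- Let A ∈ ℝ^{n×d} and b ∈ ℝ^n with the system Ax = b consistent, let c_1, …, c_d be a basis of ℝ^d, and let x_0 ∈ ℝ^d with A x_0 ≠ b. Let w be any maximizer of |c'A'(A x_0 − b)| / ‖A c‖₂ over the set { c ∈ {c_1, …, c_d} : A c ≠ 0 }. Then w'A'(A x_0 − b) ≠ 0. Consequently, the greedy column-action procedure that at each step selects its direction by this maximization (breaking ties by smallest index) performs a nontrivial update whenever the current iterate is not a solution; i.e., this 1-Markovian procedure is exploratory with constant π = 1. -/
/-!
Write `r = A x₀ − b`. Consistency puts `r` in the range of `A`, say `r = A (x₀ − x)`, so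
`(x₀ − x)' A' r = ‖r‖² > 0` and the gradient `A' r` is nonzero. A nonzero vector cannot be
orthogonal to a spanning family, so some `cᵢ` has `cᵢ' A' r ≠ 0` (which forces `A cᵢ ≠ 0`);
its ratio is positive, hence so is the maximal ratio, attained at `w`.
-/

open Matrix

/-- The Euclidean (ℓ²) norm of a vector in ℝ^d. -/
noncomputable def enorm {d : ℕ} (v : Fin d → ℝ) : ℝ := Real.sqrt (∑ i, v i ^ 2)

theorem enorm_pos_of_ne_zero {d : ℕ} {v : Fin d → ℝ} (hv : v ≠ 0) : 0 < _root_.enorm v := by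
  have hsum : ∑ i, v i ^ 2 ≠ 0 := by
    simpa only [sq, dotProduct] using (dotProduct_self_eq_zero (v := v)).not.mpr hv
  exact Real.sqrt_pos.mpr <| (Finset.sum_nonneg fun i _ => sq_nonneg (v i)).lt_of_ne' hsum

namespace Matrix

variable {ι m n R : Type*} [Fintype m] [CommRing R] [LinearOrder R] [IsStrictOrderedRing R]

theorem exists_dotProduct_ne_zero_of_span_eq_top {c : ι → m → R}
    (hspan : Submodule.span R (Set.range c) = ⊤) {v : m → R} (hv : v ≠ 0) :
    ∃ i, c i ⬝ᵥ v ≠ 0 := by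
  by_contra! hall
  have hvanish : (dotProductBilin R R).flip v = 0 :=
    LinearMap.ext_on_range hspan fun i => hall i
  exact hv <| dotProduct_self_eq_zero.mp <| LinearMap.congr_fun hvanish v

theorem transpose_mulVec_mulVec_ne_zero [Fintype n] (A : Matrix m n R) {x : n → R}
    (hx : A *ᵥ x ≠ 0) : Aᵀ *ᵥ (A *ᵥ x) ≠ 0 := by
  intro h
  apply hx
  rw [← dotProduct_self_eq_zero, ← dotProduct_transpose_mulVec, h, dotProduct_zero]

end Matrix

theorem stmt_13_general {n d : ℕ} (A : Matrix (Fin n) (Fin d) ℝ) (b : Fin n → ℝ)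
    (hcons : ∃ x, A.mulVec x = b)
    (c : Fin d → Fin d → ℝ)
    (hspan : Submodule.span ℝ (Set.range c) = ⊤)
    (x0 : Fin d → ℝ) (hx0 : A.mulVec x0 ≠ b)
    (w : Fin d → ℝ)
    (hmax : ∀ i, A.mulVec (c i) ≠ 0 →
      |c i ⬝ᵥ Aᵀ.mulVec (A.mulVec x0 - b)| / _root_.enorm (A.mulVec (c i)) ≤
        |w ⬝ᵥ Aᵀ.mulVec (A.mulVec x0 - b)| / _root_.enorm (A.mulVec w)) :
    w ⬝ᵥ Aᵀ.mulVec (A.mulVec x0 - b) ≠ 0 := by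
  obtain ⟨x, rfl⟩ := hcons
  have hres : A *ᵥ x0 - A *ᵥ x = A *ᵥ (x0 - x) := (mulVec_sub A x0 x).symm
  have hgrad : Aᵀ *ᵥ (A *ᵥ x0 - A *ᵥ x) ≠ 0 := by
    rw [hres]
    exact A.transpose_mulVec_mulVec_ne_zero (by rwa [← hres, sub_ne_zero])
  obtain ⟨i, hi⟩ := exists_dotProduct_ne_zero_of_span_eq_top hspan hgrad
  have hAci : A *ᵥ c i ≠ 0 := by
    intro h
    rw [dotProduct_transpose_mulVec, h, dotProduct_zero] at hi
    exact hi rfl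
  intro hw
  have hratio := hmax i hAci
  rw [hw, abs_zero, zero_div] at hratio
  exact hratio.not_gt (div_pos (abs_pos.mpr hi) (enorm_pos_of_ne_zero hAci))

/-- for a consistent system with `A x₀ ≠ b` and a basis `c₁, …, c_d` of ℝ^d,
any maximizer `w` of `|c'A'(A x₀ − b)|/‖A c‖₂` over `{cᵢ : A cᵢ ≠ 0}` satisfies
`w'A'(A x₀ − b) ≠ 0`; i.e., the greedy column-action selection rule performs a nontrivial
update whenever the current iterate is not a solution (so the 1-Markovian greedy procedure
is exploratory with constant π = 1). -/
theorem stmt_13 {n d : ℕ} (A : Matrix (Fin n) (Fin d) ℝ) (b : Fin n → ℝ)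
    (hcons : ∃ x, A.mulVec x = b)
    (c : Fin d → Fin d → ℝ) (hindep : LinearIndependent ℝ c)
    (hspan : Submodule.span ℝ (Set.range c) = ⊤)
    (x0 : Fin d → ℝ) (hx0 : A.mulVec x0 ≠ b)
    (w : Fin d → ℝ) (hw : ∃ i, w = c i) (hAw : A.mulVec w ≠ 0)
    (hmax : ∀ i, A.mulVec (c i) ≠ 0 →
      |c i ⬝ᵥ Aᵀ.mulVec (A.mulVec x0 - b)| / _root_.enorm (A.mulVec (c i)) ≤
        |w ⬝ᵥ Aᵀ.mulVec (A.mulVec x0 - b)| / _root_.enorm (A.mulVec w)) :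
    w ⬝ᵥ Aᵀ.mulVec (A.mulVec x0 - b) ≠ 0 :=
  stmt_13_general A b hcons c hspan x0 hx0 w hmax
end
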